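/- Let H be a reduced double-well type potential, β > 0, and let μ_β be the Gibbs measure at inverse temperature β. Then: (1) μ_β([01]) = μ_β([10]); (2) μ_β([0^n 1]) / μ_β([01]) = ( Σ_{k≥n} λ_β^{−k} e^{−β H_k^1} ) F_β^0(λ_β) and μ_β([0]) / μ_β([01]) = F̃_β^1(λ_β) / F_β^1(λ_β); (3) μ_β([1^n 0]) / μ_β([10]) = ( Σ_{k≥n} λ_β^{−k} e^{−β H_k^0} ) F_β^1(λ_β) and μ_β([1]) / μ_β([10]) = F̃_β^0(λ_β) / F_β^0(λ_β); (4) μ_β([0 1^n 0]) / μ_β([10]) = e^{−β H_n^0} F_β^1(λ_β) λ_β^{−n} and μ_β([1 0^n 1]) / μ_β([01]) = e^{−β H_n^1} F_β^0(λ_β) λ_β^{−n}; (5) μ_β([0]) / μ_β([1]) = ( F_β^0(λ_β) / F_β^1(λ_β) ) · ( F̃_β^1(λ_β) / F̃_β^0(λ_β) ). -/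

import Mathlib

open MeasureTheory Filter Topology

/-- The one-sided full shift space on two symbols. -/
abbrev Sig : Type := ℕ → Fin 2

/-- The left shift map. -/
def shft : Sig → Sig := fun x n => x (n + 1)

/-- Concatenation of a symbol with a configuration. -/
def cons2 (i : Fin 2) (x : Sig) : Sig := fun n => match n with
  | 0 => i
  | Nat.succ k => x k

/-- `x` and `y` agree on their first `n` coordinates. -/
def nClose (n : ℕ) (x y : Sig) : Prop := ∀ k, k < n → x k = y k

/-- The `n`-th variation of `H`. -/
noncomputable def Var (H : Sig → ℝ) (n : ℕ) : ℝ :=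
  sSup {d : ℝ | ∃ x y : Sig, nClose n x y ∧ d = |H x - H y|}

/-- `H` has summable variation. -/
def SummableVar (H : Sig → ℝ) : Prop := Summable (fun n : ℕ => Var H (n + 1))

/-- The transfer operator at inverse temperature `β`. -/
noncomputable def transfer (β : ℝ) (H : Sig → ℝ) (Φ : Sig → ℝ) : Sig → ℝ :=
  fun x => Real.exp (-β * H (cons2 0 x)) * Φ (cons2 0 x)
         + Real.exp (-β * H (cons2 1 x)) * Φ (cons2 1 x)

/-- The cylinder set determined by a finite word. -/
def cyl (w : List (Fin 2)) : Set Sig := {x | ∀ i : ℕ, ∀ h : i < w.length, x i = w.get ⟨i, h⟩}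

/-- The fixed point `0^∞`. -/
def zpt : Sig := fun _ => 0

/-- The fixed point `1^∞`. -/
def opt : Sig := fun _ => 1

/-- The minimizing ergodic value of `H`. -/
noncomputable def Hbar (H : Sig → ℝ) : ℝ :=
  sInf {r : ℝ | ∃ μ : Measure Sig, IsProbabilityMeasure μ ∧ μ.map shft = μ ∧ r = ∫ x, H x ∂μ}

/-- A minimizing measure for `H`. -/
def IsMinimizing (H : Sig → ℝ) (μ : Measure Sig) : Prop :=
  IsProbabilityMeasure μ ∧ μ.map shft = μ ∧
  ∀ ν : Measure Sig, IsProbabilityMeasure ν → ν.map shft = ν →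
    ∫ x, H x ∂μ ≤ ∫ x, H x ∂ν

/-- The (topological) support of a measure. -/
def mSupport (μ : Measure Sig) : Set Sig := {x | ∀ U : Set Sig, IsOpen U → x ∈ U → μ U ≠ 0}

/-- The Mather set of `H` : union of supports of minimizing measures. -/
def mather (H : Sig → ℝ) : Set Sig := {x | ∃ μ : Measure Sig, IsMinimizing H μ ∧ x ∈ mSupport μ}

/-- Birkhoff sum of the normalized potential. -/
noncomputable def birk (H : Sig → ℝ) (k : ℕ) (z : Sig) : ℝ :=
  ∑ i ∈ Finset.range k, (H (shft^[i] z) - Hbar H)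

/-- The quantity `S_n^p(x,y)` (an infimum in `EReal`, `+∞` when the defining set is empty). -/
noncomputable def SBar (H : Sig → ℝ) (p n : ℕ) (x y : Sig) : EReal :=
  sInf {s : EReal | ∃ k : ℕ, n ≤ k ∧ ∃ z : Sig, nClose p z x ∧ nClose p (shft^[k] z) y ∧
    s = (birk H k z : EReal)}

/-- The Peierls barrier `h(x,y)`; since `S_n^p(x,y)` is nondecreasing in both `n` and `p`,
the double limit is a double supremum. -/
noncomputable def peierls (H : Sig → ℝ) (x y : Sig) : EReal := ⨆ p : ℕ, ⨆ n : ℕ, SBar H p n x y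

/-- The Lax-Oleinik operator (the two preimages of `y` under the shift are `0y` and `1y`). -/
noncomputable def laxOleinik (H V : Sig → ℝ) : Sig → ℝ :=
  fun y => min (V (cons2 0 y) + H (cons2 0 y)) (V (cons2 1 y) + H (cons2 1 y))

/-- A calibrated sub-action of `H`. -/
def IsCalibrated (H V : Sig → ℝ) : Prop :=
  Continuous V ∧ laxOleinik H V = fun y => V y + Hbar H

/-- Membership in the class `𝕂`. -/
def InK (H V : Sig → ℝ) : Prop :=
  Continuous V ∧ ∀ n : ℕ, 1 ≤ n → Var V n ≤ ∑' k : ℕ, Var H (n + 1 + k)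

/-- A reduced double-well type potential with data `(H_n^0)`, `(H_n^1)` (indexed from `n = 1`). -/
structure ReducedDW (H : Sig → ℝ) (H0 H1 : ℕ → ℝ) : Prop where
  cont : Continuous H
  nonneg : ∀ x, 0 ≤ H x
  svar : SummableVar H
  zero : ∀ x ∈ cyl [0, 0] ∪ cyl [1, 1], H x = 0
  pos0 : ∀ n, 1 ≤ n → 0 < H0 n
  pos1 : ∀ n, 1 ≤ n → 0 < H1 n
  val0 : ∀ n, 1 ≤ n → ∀ x ∈ cyl (0 :: (List.replicate n 1 ++ [0])), H x = H0 n
  val1 : ∀ n, 1 ≤ n → ∀ x ∈ cyl (1 :: (List.replicate n 0 ++ [1])), H x = H1 n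
  bdd0 : ∀ k : ℕ, BddAbove (Set.range fun n : ℕ => |H0 (k + 1) - H0 (k + 1 + n)|)
  bdd1 : ∀ k : ℕ, BddAbove (Set.range fun n : ℕ => |H1 (k + 1) - H1 (k + 1 + n)|)
  sum0 : Summable (fun k : ℕ => ⨆ n : ℕ, |H0 (k + 1) - H0 (k + 1 + n)|)
  sum1 : Summable (fun k : ℕ => ⨆ n : ℕ, |H1 (k + 1) - H1 (k + 1 + n)|)

/-- A double-well type potential with data `a_n^0, a_n^1, b_n^0, b_n^1` (indexed from `n = 1`). -/
structure DW (H : Sig → ℝ) (a0 a1 b0 b1 : ℕ → ℝ) : Prop where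
  cont : Continuous H
  nonneg : ∀ x, 0 ≤ H x
  svar : SummableVar H
  anneg0 : ∀ n, 1 ≤ n → 0 ≤ a0 n
  anneg1 : ∀ n, 1 ≤ n → 0 ≤ a1 n
  bpos0 : ∀ n, 1 ≤ n → 0 < b0 n
  bpos1 : ∀ n, 1 ≤ n → 0 < b1 n
  vala0 : ∀ n, 1 ≤ n → ∀ x ∈ cyl (0 :: (List.replicate n 0 ++ [1])), H x = a0 n
  vala1 : ∀ n, 1 ≤ n → ∀ x ∈ cyl (1 :: (List.replicate n 1 ++ [0])), H x = a1 n
  valb0 : ∀ n, 1 ≤ n → ∀ x ∈ cyl (0 :: (List.replicate n 1 ++ [0])), H x = b0 n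
  valb1 : ∀ n, 1 ≤ n → ∀ x ∈ cyl (1 :: (List.replicate n 0 ++ [1])), H x = b1 n
  suma0 : Summable (fun n : ℕ => ((n + 1 : ℕ) : ℝ) * a0 (n + 1))
  suma1 : Summable (fun n : ℕ => ((n + 1 : ℕ) : ℝ) * a1 (n + 1))
  bddb0 : ∀ k : ℕ, BddAbove (Set.range fun n : ℕ => |b0 (k + 1) - b0 (k + 1 + n)|)
  bddb1 : ∀ k : ℕ, BddAbove (Set.range fun n : ℕ => |b1 (k + 1) - b1 (k + 1 + n)|)
  sumb0 : Summable (fun k : ℕ => ⨆ n : ℕ, |b0 (k + 1) - b0 (k + 1 + n)|)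
  sumb1 : Summable (fun k : ℕ => ⨆ n : ℕ, |b1 (k + 1) - b1 (k + 1 + n)|)

/-- The series `F_β(λ) = Σ_{k≥1} λ^{-k} e^{-β H_k}`. -/
noncomputable def Fser (β : ℝ) (Hs : ℕ → ℝ) (lam : ℝ) : ℝ :=
  ∑' k : ℕ, (lam ^ (k + 1))⁻¹ * Real.exp (-β * Hs (k + 1))

/-- The series `F̃_β(λ) = Σ_{k≥1} k λ^{-k} e^{-β H_k}`. -/
noncomputable def Ftser (β : ℝ) (Hs : ℕ → ℝ) (lam : ℝ) : ℝ :=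
  ∑' k : ℕ, ((k + 1 : ℕ) : ℝ) * (lam ^ (k + 1))⁻¹ * Real.exp (-β * Hs (k + 1))

/-- The data of the Ruelle-Perron-Frobenius solution and Gibbs measure at inverse temperature `β`:
eigenfunction `Φ` (positive, continuous, max 1), eigenvalue `lam`, eigenprobability `ν`,
and the Gibbs measure `μ = Φ ν / ∫ Φ dν`. -/
def GibbsData (H : Sig → ℝ) (β : ℝ) (Φ : Sig → ℝ) (lam : ℝ) (ν μ : Measure Sig) : Prop :=
  Continuous Φ ∧ (∀ x, 0 < Φ x) ∧ IsGreatest (Set.range Φ) 1 ∧ 0 < lam ∧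
  (transfer β H Φ = fun x => lam * Φ x) ∧
  IsProbabilityMeasure ν ∧
  (∀ f : Sig → ℝ, Continuous f → ∫ x, transfer β H f x ∂ν = lam * ∫ x, f x ∂ν) ∧
  μ = (ENNReal.ofReal (∫ x, Φ x ∂ν))⁻¹ • ν.withDensity (fun x => ENNReal.ofReal (Φ x))

/-!
The potential vanishes on `[a a]` and is constant on each `[a bⁿ a]`, so `H x` only depends on `x`
up to its first return to `x 0`. Feeding this into the iterates of the transfer operator, together
with uniform continuity, shows that the eigenfunction `Φ` is constant on every cylinder whose word
changes symbol. The eigen-equation at points of `[aⁿ b]` then becomes a linear recursion in `n`,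
solved by the tails `Σ_{k ≥ n} λ^{-k} e^{-β H_k^b}`; conformality of `ν` gives
`ν[aⁿ⁺¹ b] = λ^{-n} ν[a b]` and `ν[b aⁿ b] = λ^{-n} e^{-β H_n^b} ν[a b]`. As `ν` has no atoms,
`[a]` is the disjoint union of the `[aⁿ b]` up to a null set, and summing gives every formula;
`F^0 F^1 = 1` comes from comparing the values of `Φ` on `[0 1]` and `[1 0]`.
-/

lemma mem_cyl_nil (x : Sig) : x ∈ cyl [] :=
  fun _ h => absurd h (Nat.not_lt_zero _)

lemma mem_cyl_cons {a : Fin 2} {w : List (Fin 2)} {x : Sig} :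
    x ∈ cyl (a :: w) ↔ x 0 = a ∧ shft x ∈ cyl w := by
  simp only [cyl, Set.mem_ofPred_eq, List.length_cons, Nat.forall_lt_succ_left',
    List.get_eq_getElem, List.getElem_cons_zero, List.getElem_cons_succ, shft]

lemma cons2_mem_cyl_cons {a b : Fin 2} {w : List (Fin 2)} {x : Sig} :
    cons2 a x ∈ cyl (b :: w) ↔ a = b ∧ x ∈ cyl w :=
  mem_cyl_cons

lemma mem_cyl_replicate_append {a b : Fin 2} {n : ℕ} {x : Sig} :
    x ∈ cyl (List.replicate n a ++ [b]) ↔ (∀ j < n, x j = a) ∧ x n = b := by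
  induction n generalizing x with
  | zero => simp [cyl]
  | succ n ih =>
    rw [List.replicate_succ, List.cons_append, mem_cyl_cons, ih, Nat.forall_lt_succ_left, and_assoc]
    rfl

lemma isClopen_cyl (w : List (Fin 2)) : IsClopen (cyl w) := by
  have : cyl w = (fun (x : Sig) (i : Fin w.length) => x i) ⁻¹' {w.get} := by
    ext x
    simp [cyl, funext_iff, Fin.forall_iff]
  rw [this]
  exact (isClopen_discrete _).preimage (continuous_pi fun i => continuous_apply (i : ℕ))

lemma measurableSet_cyl (w : List (Fin 2)) : MeasurableSet (cyl w) :=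
  (isClopen_cyl w).isOpen.measurableSet

lemma mem_cyl_of_nClose {w : List (Fin 2)} {n : ℕ} {x y : Sig} (hx : x ∈ cyl w)
    (hxy : nClose n x y) (hn : w.length ≤ n) : y ∈ cyl w :=
  fun i hi => (hxy i (by omega)).symm.trans (hx i hi)

lemma nClose_of_mem_cyl {w : List (Fin 2)} {x y : Sig} (hx : x ∈ cyl w) (hy : y ∈ cyl w) :
    nClose w.length x y :=
  fun i hi => (hx i hi).trans (hy i hi).symm

def cylPt (w : List (Fin 2)) : Sig := fun i => w.getD i 0

lemma cylPt_mem_cyl (w : List (Fin 2)) : cylPt w ∈ cyl w :=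
  fun _ hi => List.getD_eq_getElem _ _ hi

lemma exists_nClose_abs_sub_le {f : Sig → ℝ} (hf : Continuous f) {ε : ℝ} (hε : 0 < ε) :
    ∃ N, ∀ u v, nClose N u v → |f u - f v| ≤ ε := by
  let := PiNat.metricSpace (E := fun _ : ℕ => Fin 2)
  obtain ⟨δ, hδ, h⟩ :=
    Metric.uniformContinuous_iff.1 (CompactSpace.uniformContinuous_of_continuous hf) ε hε
  obtain ⟨N, hN⟩ := exists_pow_lt_of_lt_one hδ (by norm_num : (1 / 2 : ℝ) < 1)
  refine ⟨N, fun u v huv => (h ?_).le⟩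
  exact (PiNat.mem_cylinder_iff_dist_le.1 (PiNat.mem_cylinder_iff.2 huv)).trans_lt hN

lemma fin2_eq_of_ne_of_ne {a b c : Fin 2} (ha : a ≠ c) (hb : b ≠ c) : a = b := by
  omega

lemma cyl_singleton_eq_iUnion_union {a b : Fin 2} (hab : a ≠ b) :
    cyl [a] = (⋃ n, cyl (List.replicate (n + 1) a ++ [b])) ∪ {fun _ => a} := by
  ext x
  simp only [Set.mem_union, Set.mem_iUnion, Set.mem_singleton_iff, mem_cyl_replicate_append,
    mem_cyl_cons, mem_cyl_nil, and_true]
  constructor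
  · intro hx0
    by_cases h : ∃ k, x k ≠ a
    · have hr : Nat.find h ≠ 0 := fun h0 => Nat.find_spec h (h0 ▸ hx0)
      refine .inl ⟨Nat.find h - 1, fun j hj => not_not.1 (Nat.find_min h (by omega)), ?_⟩
      rw [Nat.sub_add_cancel (Nat.one_le_iff_ne_zero.2 hr)]
      exact fin2_eq_of_ne_of_ne (Nat.find_spec h) hab.symm
    · simp only [not_exists, not_not] at h
      exact .inr (funext h)
  · rintro (⟨n, hrun, -⟩ | rfl)
    · exact hrun 0 (by omega)
    · rfl

lemma pairwise_disjoint_cyl_replicate_append {a b : Fin 2} (hab : a ≠ b) :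
    Pairwise (Function.onFun Disjoint fun n => cyl (List.replicate (n + 1) a ++ [b])) := by
  intro m n hmn
  rw [Function.onFun, Set.disjoint_left]
  intro x hm hn
  rw [mem_cyl_replicate_append] at hm hn
  rcases lt_or_gt_of_ne hmn with h | h
  · exact hab ((hn.1 (m + 1) (by omega)).symm.trans hm.2)
  · exact hab ((hm.1 (n + 1) (by omega)).symm.trans hn.2)

namespace ReducedDW

variable {H : Sig → ℝ} {H0 H1 : ℕ → ℝ}

lemma eq_zero_of_eq (hR : ReducedDW H H0 H1) {x : Sig} (h : x 0 = x 1) : H x = 0 := by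
  apply hR.zero
  simp only [Set.mem_union, mem_cyl_cons, shft, zero_add, ← h, mem_cyl_nil, and_true]
  omega

lemma eq_of_mem_excursion (hR : ReducedDW H H0 H1) {a b : Fin 2} (hab : a ≠ b) {n : ℕ}
    (hn : 1 ≤ n) {x y : Sig} (hx : x ∈ cyl (a :: (List.replicate n b ++ [a])))
    (hy : y ∈ cyl (a :: (List.replicate n b ++ [a]))) : H x = H y := by
  fin_cases a <;> fin_cases b
  · exact absurd rfl hab
  · rw [hR.val0 n hn x hx, hR.val0 n hn y hy]
  · rw [hR.val1 n hn x hx, hR.val1 n hn y hy]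
  · exact absurd rfl hab

/-- `H x` only depends on `x` up to its first return to `x 0`, which happens by time `m + 1`
as soon as `x` switches symbols at time `m ≥ 1`. -/
lemma eq_of_nClose (hR : ReducedDW H H0 H1) {m : ℕ} (hm : 1 ≤ m) {x y : Sig}
    (hsw : x m ≠ x (m + 1)) (hxy : nClose (m + 2) x y) : H x = H y := by
  by_cases h01 : x 0 = x 1
  · rw [hR.eq_zero_of_eq h01, hR.eq_zero_of_eq (x := y)]
    rwa [← hxy 0 (by omega), ← hxy 1 (by omega)]
  obtain ⟨k, hkm, hk⟩ : ∃ k ≤ m, x (k + 1) ≠ x 1 := by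
    by_cases hm1 : x m = x 1
    · exact ⟨m, le_rfl, fun h => hsw (hm1.trans h.symm)⟩
    · exact ⟨m - 1, Nat.sub_le m 1, by rwa [Nat.sub_add_cancel hm]⟩
  have hex : ∃ k, x (k + 1) ≠ x 1 := ⟨k, hk⟩
  have hr1 : 1 ≤ Nat.find hex := Nat.one_le_iff_ne_zero.2 fun h => Nat.find_spec hex (by rw [h])
  have hrm : Nat.find hex ≤ m := (Nat.find_min' hex hk).trans hkm
  have hx : x ∈ cyl (x 0 :: (List.replicate (Nat.find hex) (x 1) ++ [x 0])) := by
    refine mem_cyl_cons.2 ⟨rfl, mem_cyl_replicate_append.2 ⟨fun j hj => ?_, ?_⟩⟩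
    · exact not_not.1 (Nat.find_min hex hj)
    · exact fin2_eq_of_ne_of_ne (Nat.find_spec hex) h01
  refine hR.eq_of_mem_excursion h01 hr1 hx (mem_cyl_of_nClose hx hxy ?_)
  simp only [List.length_cons, List.length_append, List.length_replicate, List.length_nil]
  omega

end ReducedDW

@[fun_prop]
lemma continuous_cons2 (i : Fin 2) : Continuous (cons2 i) :=
  continuous_pi fun n => match n with
    | 0 => continuous_const
    | k + 1 => continuous_apply k

section Transfer

variable {β : ℝ} {H : Sig → ℝ}

lemma transfer_eq_of_ne {a b : Fin 2} (hab : a ≠ b) (f : Sig → ℝ) (x : Sig) :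
    transfer β H f x = Real.exp (-β * H (cons2 a x)) * f (cons2 a x)
      + Real.exp (-β * H (cons2 b x)) * f (cons2 b x) := by
  fin_cases a <;> fin_cases b
  · exact absurd rfl hab
  · rfl
  · exact add_comm _ _
  · exact absurd rfl hab

lemma continuous_transfer (hH : Continuous H) {f : Sig → ℝ} (hf : Continuous f) :
    Continuous (transfer β H f) := by
  unfold transfer
  fun_prop

lemma transfer_mono : Monotone (transfer β H) := fun _ _ h _ =>
  add_le_add (mul_le_mul_of_nonneg_left (h _) (Real.exp_pos _).le)
    (mul_le_mul_of_nonneg_left (h _) (Real.exp_pos _).le)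

lemma transfer_smul (c : ℝ) (f : Sig → ℝ) : transfer β H (c • f) = c • transfer β H f := by
  funext x
  simp only [transfer, Pi.smul_apply, smul_eq_mul]
  ring

lemma transfer_iterate_of_eq_smul {Φ : Sig → ℝ} {lam : ℝ} (h : transfer β H Φ = lam • Φ)
    (m : ℕ) : (transfer β H)^[m] Φ = lam ^ m • Φ := by
  induction m with
  | zero => simp
  | succ m ih =>
    rw [Function.iterate_succ_apply', ih, transfer_smul, h, smul_smul, pow_succ]

lemma abs_transfer_sub_le {g G : Sig → ℝ} {x y : Sig}
    (hH : ∀ i, H (cons2 i x) = H (cons2 i y))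
    (hg : ∀ i, |g (cons2 i x) - g (cons2 i y)| ≤ G (cons2 i x)) :
    |transfer β H g x - transfer β H g y| ≤ transfer β H G x := by
  simp only [transfer, ← hH]
  rw [show ∀ e₀ e₁ u₀ u₁ v₀ v₁ : ℝ, e₀ * u₀ + e₁ * u₁ - (e₀ * v₀ + e₁ * v₁)
      = e₀ * (u₀ - v₀) + e₁ * (u₁ - v₁) from fun _ _ _ _ _ _ => by ring]
  refine (abs_add_le _ _).trans ?_
  rw [abs_mul, abs_mul, abs_of_pos (Real.exp_pos _), abs_of_pos (Real.exp_pos _)]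
  exact add_le_add (mul_le_mul_of_nonneg_left (hg 0) (Real.exp_pos _).le)
    (mul_le_mul_of_nonneg_left (hg 1) (Real.exp_pos _).le)

variable {H0 H1 : ℕ → ℝ}

/-- Preimages under the shift keep the symbol switch at time `j` inside the common prefix, so by
`ReducedDW.eq_of_nClose` the weights of `L^m` at `x` and `y` coincide. -/
lemma abs_transfer_iterate_sub_le (hR : ReducedDW H H0 H1) {f : Sig → ℝ} {ε : ℝ} {N : ℕ}
    (hf : ∀ u v, nClose N u v → |f u - f v| ≤ ε) (m : ℕ) :
    ∀ {n j : ℕ} {x y : Sig}, nClose n x y → j + 1 < n → x j ≠ x (j + 1) → N ≤ m + n →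
      |(transfer β H)^[m] f x - (transfer β H)^[m] f y| ≤ (transfer β H)^[m] (fun _ => ε) x := by
  induction m with
  | zero => exact fun hxy _ _ hN => hf _ _ fun k hk => hxy k (by omega)
  | succ m ih =>
    intro n j x y hxy hj hsw hN
    have hcons : ∀ i, nClose (n + 1) (cons2 i x) (cons2 i y) := fun i k hk => by
      cases k with
      | zero => rfl
      | succ k => exact hxy k (by omega)
    simp only [Function.iterate_succ_apply']
    exact abs_transfer_sub_le
      (fun i => hR.eq_of_nClose (m := j + 1) (by omega) hsw fun k hk => hcons i k (by omega))
      (fun i => ih (hcons i) (j := j + 1) (by omega) hsw (by omega))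

structure IsPosEigenfunction (β : ℝ) (H : Sig → ℝ) (lam : ℝ) (Φ : Sig → ℝ) : Prop where
  continuous : Continuous Φ
  pos : ∀ x, 0 < Φ x
  transfer_eq : transfer β H Φ = lam • Φ

namespace IsPosEigenfunction

variable {Φ : Sig → ℝ} {lam : ℝ}

lemma apply_eq (hΦ : IsPosEigenfunction β H lam Φ) (x : Sig) :
    transfer β H Φ x = lam * Φ x :=
  congrFun hΦ.transfer_eq x

lemma lam_pos (hΦ : IsPosEigenfunction β H lam Φ) : 0 < lam := by
  have h := hΦ.apply_eq zpt
  have : 0 < transfer β H Φ zpt :=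
    add_pos (mul_pos (Real.exp_pos _) (hΦ.pos _)) (mul_pos (Real.exp_pos _) (hΦ.pos _))
  exact pos_of_mul_pos_left (h ▸ this) (hΦ.pos zpt).le

lemma eq_of_nClose (hΦ : IsPosEigenfunction β H lam Φ) (hR : ReducedDW H H0 H1) {n j : ℕ}
    {x y : Sig} (hxy : nClose n x y) (hj : j + 1 < n) (hsw : x j ≠ x (j + 1)) : Φ x = Φ y := by
  obtain ⟨x₀, -, hx₀⟩ := isCompact_univ.exists_isMinOn Set.univ_nonempty hΦ.continuous.continuousOn
  have hc := hΦ.pos x₀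
  -- `λ^N |Φ x - Φ y| ≤ L^N ε ≤ (ε / min Φ) L^N Φ x = (ε / min Φ) λ^N Φ x`
  have hmain : ∀ ε > 0, |Φ x - Φ y| ≤ ε / Φ x₀ * Φ x := by
    intro ε hε
    obtain ⟨N, hN⟩ := exists_nClose_abs_sub_le hΦ.continuous hε
    have hconst : (fun _ => ε) ≤ (ε / Φ x₀) • Φ := fun u => by
      rw [Pi.smul_apply, smul_eq_mul, div_mul_eq_mul_div, le_div_iff₀ hc]
      exact mul_le_mul_of_nonneg_left (hx₀ (Set.mem_univ u)) hε.le
    have key := (abs_transfer_iterate_sub_le (β := β) hR hN N hxy hj hsw (by omega)).trans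
      ((transfer_mono.iterate N) hconst x)
    rw [Function.Commute.iterate_left (g := ((ε / Φ x₀) • ·)) (transfer_smul _) N,
      transfer_iterate_of_eq_smul hΦ.transfer_eq] at key
    have hpow := pow_pos hΦ.lam_pos N
    simp only [Pi.smul_apply, smul_eq_mul, ← mul_sub, abs_mul, abs_of_pos hpow] at key
    nlinarith
  refine eq_of_forall_dist_le fun δ hδ => ?_
  have := hmain (δ * Φ x₀ / Φ x) (by have := hΦ.pos x; positivity)
  rw [Real.dist_eq]
  exact this.trans_eq (by field_simp [(hΦ.pos x).ne'])

end IsPosEigenfunction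

end Transfer

def IsEigenmeasure (β : ℝ) (H : Sig → ℝ) (lam : ℝ) (ν : Measure Sig) : Prop :=
  ∀ f : Sig → ℝ, Continuous f → ∫ x, transfer β H f x ∂ν = lam * ∫ x, f x ∂ν

section Eigenmeasure

variable {β lam : ℝ} {H : Sig → ℝ} {ν : Measure Sig}

lemma integrable_of_continuous [IsFiniteMeasure ν] {f : Sig → ℝ} (hf : Continuous f) :
    Integrable f ν :=
  hf.integrable_of_hasCompactSupport (.of_compactSpace f)

lemma measureReal_cyl_cons [IsFiniteMeasure ν] (hν : IsEigenmeasure β H lam ν)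
    (hlam : lam ≠ 0) (i : Fin 2) (w : List (Fin 2)) :
    ν.real (cyl (i :: w)) = lam⁻¹ * ∫ x in cyl w, Real.exp (-β * H (cons2 i x)) ∂ν := by
  have htr : transfer β H ((cyl (i :: w)).indicator 1)
      = (cyl w).indicator fun x => Real.exp (-β * H (cons2 i x)) := by
    funext x
    fin_cases i <;> by_cases hx : x ∈ cyl w <;>
      simp [transfer, cons2_mem_cyl_cons, hx]
  have h := hν _ ((isClopen_cyl (i :: w)).continuous_indicator continuous_one)
  rw [htr, integral_indicator (measurableSet_cyl w),
    integral_indicator_one (measurableSet_cyl _)] at h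
  rw [h, inv_mul_cancel_left₀ hlam]

lemma measureReal_cyl_cons_of_eq [IsFiniteMeasure ν] (hν : IsEigenmeasure β H lam ν)
    (hlam : lam ≠ 0) {i : Fin 2} {w : List (Fin 2)} {h : ℝ}
    (hc : ∀ x ∈ cyl w, H (cons2 i x) = h) :
    ν.real (cyl (i :: w)) = lam⁻¹ * Real.exp (-β * h) * ν.real (cyl w) := by
  rw [measureReal_cyl_cons hν hlam, setIntegral_congr_fun (measurableSet_cyl w)
    (g := fun _ => Real.exp (-β * h))
    fun x hx => by simp only [hc x hx], setIntegral_const, smul_eq_mul]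
  ring

variable [IsProbabilityMeasure ν]

lemma measureReal_cyl_le (hH : Continuous H) (hHnn : ∀ x, 0 ≤ H x) (hβ : 0 ≤ β)
    (hν : IsEigenmeasure β H lam ν) (hlam : 0 < lam) (w : List (Fin 2)) :
    ν.real (cyl w) ≤ lam⁻¹ ^ w.length := by
  induction w with
  | nil => simp
  | cons i w ih =>
    rw [measureReal_cyl_cons hν hlam.ne', List.length_cons, pow_succ']
    gcongr
    calc ∫ x in cyl w, Real.exp (-β * H (cons2 i x)) ∂ν ≤ ∫ _ in cyl w, (1 : ℝ) ∂ν :=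
          setIntegral_mono_on (integrable_of_continuous (by fun_prop)).integrableOn
            (integrable_const _).integrableOn (measurableSet_cyl w)
            fun x _ => Real.exp_le_one_iff.2 (by nlinarith [hHnn (cons2 i x)])
      _ ≤ lam⁻¹ ^ w.length := by simpa using ih

lemma measure_singleton_eq_zero (hH : Continuous H) (hHnn : ∀ x, 0 ≤ H x) (hβ : 0 ≤ β)
    (hν : IsEigenmeasure β H lam ν) (hlam : 1 < lam) (x : Sig) : ν {x} = 0 := by
  have hbound : ∀ n, ν.real {x} ≤ lam⁻¹ ^ n := fun n => by
    have hx : x ∈ cyl (List.ofFn fun k : Fin n => x k) := fun i hi => by simp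
    simpa using (measureReal_mono (Set.singleton_subset_iff.2 hx)).trans
      (measureReal_cyl_le hH hHnn hβ hν (zero_lt_one.trans hlam) _)
  have hlim := tendsto_pow_atTop_nhds_zero_of_lt_one (by positivity) (inv_lt_one_of_one_lt₀ hlam)
  exact (measureReal_eq_zero_iff).1
    (le_antisymm (ge_of_tendsto' hlim hbound) measureReal_nonneg)

lemma measureReal_cyl_pos (hH : Continuous H) (hν : IsEigenmeasure β H lam ν) (hlam : 0 < lam)
    (w : List (Fin 2)) : 0 < ν.real (cyl w) := by
  induction w with
  | nil => simp [Set.eq_univ_of_forall mem_cyl_nil]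
  | cons i w ih =>
    rw [measureReal_cyl_cons hν hlam.ne']
    refine mul_pos (inv_pos.2 hlam) ((setIntegral_pos_iff_support_of_nonneg_ae
      (.of_forall fun _ => (Real.exp_pos _).le)
      (integrable_of_continuous (by fun_prop)).integrableOn).2 ?_)
    simpa [Function.support, (Real.exp_pos _).ne'] using (ENNReal.toReal_pos_iff.1 ih).1

lemma one_lt_of_isEigenmeasure {H0 H1 : ℕ → ℝ} (hR : ReducedDW H H0 H1)
    (hν : IsEigenmeasure β H lam ν) : 1 < lam := by
  have hgt : ∀ x, 1 < transfer β H (fun _ => 1) x := fun x => by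
    obtain ⟨b, hb⟩ : ∃ b, x 0 ≠ b := ⟨x 0 + 1, by omega⟩
    rw [transfer_eq_of_ne hb, hR.eq_zero_of_eq (x := cons2 (x 0) x) rfl]
    simp [Real.exp_pos]
  have hint := integrable_of_continuous (ν := ν) (continuous_transfer (β := β) hR.cont
    (continuous_const (y := (1 : ℝ))))
  have hpos := (integral_pos_iff_support_of_nonneg (fun x => (sub_pos.2 (hgt x)).le)
    (hint.sub (integrable_const 1))).2 (by simp [Function.support, (sub_pos.2 (hgt _)).ne'])
  rw [integral_sub hint (integrable_const 1), hν _ continuous_const] at hpos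
  simpa using hpos

lemma setIntegral_cyl_singleton_eq_tsum (hH : Continuous H) (hHnn : ∀ x, 0 ≤ H x) (hβ : 0 ≤ β)
    (hν : IsEigenmeasure β H lam ν) (hlam : 1 < lam) {a b : Fin 2} (hab : a ≠ b) {g : Sig → ℝ}
    (hg : Integrable g ν) :
    ∫ x in cyl [a], g x ∂ν = ∑' n, ∫ x in cyl (List.replicate (n + 1) a ++ [b]), g x ∂ν := by
  rw [cyl_singleton_eq_iUnion_union hab, setIntegral_congr_set (union_ae_eq_left_of_ae_eq_empty
    (ae_eq_empty.2 (measure_singleton_eq_zero hH hHnn hβ hν hlam _))),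
    integral_iUnion (fun n => measurableSet_cyl _) (pairwise_disjoint_cyl_replicate_append hab)
    hg.integrableOn]

end Eigenmeasure

lemma hasSum_of_sub_succ {e b : ℕ → ℝ} (he : Tendsto e atTop (𝓝 0)) (hb : Summable b)
    (h : ∀ n, e n - e (n + 1) = b n) : HasSum b (e 0) := by
  refine hb.hasSum_iff_tendsto_nat.2 ?_
  simp_rw [← h, Finset.sum_range_sub']
  simpa using tendsto_const_nhds.sub he

lemma summable_add_of_le_geometric {f : ℕ → ℝ} {q : ℝ} (hf : ∀ k, 0 ≤ f k) (hq₀ : 0 ≤ q)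
    (hq₁ : q < 1) (hfq : ∀ k, f k ≤ q ^ k) : Summable fun p : ℕ × ℕ => f (p.1 + p.2) := by
  have hg := summable_geometric_of_lt_one hq₀ hq₁
  exact .of_nonneg_of_le (fun _ => hf _) (fun p => (hfq _).trans_eq (pow_add _ _ _))
    (hg.mul_of_nonneg hg (fun k => pow_nonneg hq₀ k) (fun k => pow_nonneg hq₀ k))

/-- Regroup the pairs `(n, j)` according to `k = n + j`: each `k` occurs `k + 1` times. -/
lemma hasSum_mul_of_summable_add {f : ℕ → ℝ} (hf : Summable fun p : ℕ × ℕ => f (p.1 + p.2)) :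
    HasSum (fun k : ℕ => ((k : ℝ) + 1) * f k) (∑' n, ∑' j, f (n + j)) := by
  let e := Finset.HasAntidiagonal.sigmaAntidiagonalEquivProd (A := ℕ)
  rw [← hf.tsum_prod]
  refine ((e.hasSum_iff (f := fun p : ℕ × ℕ => f (p.1 + p.2))).2 hf.hasSum).sigma fun n => ?_
  have hc : ∀ c : Finset.HasAntidiagonal.antidiagonal n, f ((e ⟨n, c⟩).1 + (e ⟨n, c⟩).2) = f n :=
    fun c => congrArg f (Finset.HasAntidiagonal.mem_antidiagonal.1 c.2)
  simp only [Function.comp_apply, hc]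
  convert hasSum_fintype (fun _ : Finset.HasAntidiagonal.antidiagonal n => f n) using 1
  simp

noncomputable def excWeight (β : ℝ) (Hs : ℕ → ℝ) (lam : ℝ) (k : ℕ) : ℝ :=
  (lam ^ k)⁻¹ * Real.exp (-β * Hs k)

section Series

variable {β lam : ℝ} {Hs : ℕ → ℝ}

lemma excWeight_pos (hlam : 0 < lam) (k : ℕ) : 0 < excWeight β Hs lam k := by
  unfold excWeight
  positivity

lemma excWeight_le (hβ : 0 ≤ β) (hlam : 0 < lam) {k : ℕ} (hk : 0 ≤ Hs k) :
    excWeight β Hs lam k ≤ lam⁻¹ ^ k := by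
  unfold excWeight
  rw [inv_pow]
  exact mul_le_of_le_one_right (by positivity) (Real.exp_le_one_iff.2 (by nlinarith))

lemma summable_excWeight_add (hβ : 0 ≤ β) (hlam : 1 < lam) (hHs : ∀ k, 1 ≤ k → 0 ≤ Hs k) :
    Summable fun p : ℕ × ℕ => excWeight β Hs lam (p.1 + p.2 + 1) := by
  have hlam₀ := zero_lt_one.trans hlam
  refine summable_add_of_le_geometric (fun k => (excWeight_pos hlam₀ _).le) (by positivity)
    (inv_lt_one_of_one_lt₀ hlam) fun k => ?_
  refine (excWeight_le hβ hlam₀ (hHs _ (by omega))).trans ?_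
  exact pow_le_pow_of_le_one (by positivity) (inv_le_one_of_one_le₀ hlam.le) (by omega)

lemma summable_excWeight (hβ : 0 ≤ β) (hlam : 1 < lam) (hHs : ∀ k, 1 ≤ k → 0 ≤ Hs k) :
    Summable fun k => excWeight β Hs lam (k + 1) := by
  simpa [add_comm] using (summable_excWeight_add hβ hlam hHs).prod_factor 0

lemma Fser_pos (hβ : 0 ≤ β) (hlam : 1 < lam) (hHs : ∀ k, 1 ≤ k → 0 ≤ Hs k) :
    0 < Fser β Hs lam :=
  (summable_excWeight hβ hlam hHs).tsum_pos (fun _ => (excWeight_pos (zero_lt_one.trans hlam) _).le)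
    0 (excWeight_pos (zero_lt_one.trans hlam) _)

lemma Ftser_eq_tsum_tsum (hβ : 0 ≤ β) (hlam : 1 < lam) (hHs : ∀ k, 1 ≤ k → 0 ≤ Hs k) :
    Ftser β Hs lam = ∑' n, ∑' j, excWeight β Hs lam (n + 1 + j) := by
  simp only [add_right_comm _ 1]
  rw [← (hasSum_mul_of_summable_add (f := fun k => excWeight β Hs lam (k + 1))
    (summable_excWeight_add hβ hlam hHs)).tsum_eq]
  simp only [Ftser, excWeight, Nat.cast_add, Nat.cast_one, mul_assoc]

end Series

def IsExcursionCost (H : Sig → ℝ) (b a : Fin 2) (Hb : ℕ → ℝ) : Prop :=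
  ∀ n, 1 ≤ n → ∀ x ∈ cyl (b :: (List.replicate n a ++ [b])), H x = Hb n

section Excursion

variable {β lam : ℝ} {H : Sig → ℝ} {H0 H1 : ℕ → ℝ} {Φ : Sig → ℝ} {a b : Fin 2} {Hb : ℕ → ℝ}

lemma IsExcursionCost.nonneg (hHb : IsExcursionCost H b a Hb) (hH : ∀ x, 0 ≤ H x) :
    ∀ n, 1 ≤ n → 0 ≤ Hb n :=
  fun n hn => hHb n hn _ (cylPt_mem_cyl _) ▸ hH _

namespace IsPosEigenfunction

lemma eq_on_pair (hΦ : IsPosEigenfunction β H lam Φ) (hR : ReducedDW H H0 H1) (hab : a ≠ b)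
    {w : List (Fin 2)} {x : Sig} (hx : x ∈ cyl (a :: b :: w)) : Φ x = Φ (cylPt [a, b]) := by
  simp only [mem_cyl_cons, shft] at hx
  refine hΦ.eq_of_nClose hR (n := 2) (j := 0) (fun k hk => ?_) (by omega)
    (by rw [hx.1, hx.2.1]; exact hab)
  interval_cases k
  exacts [hx.1, hx.2.1]

lemma eq_on_run (hΦ : IsPosEigenfunction β H lam Φ) (hR : ReducedDW H H0 H1) (hab : a ≠ b)
    (n : ℕ) {x : Sig} (hx : x ∈ cyl (List.replicate (n + 1) a ++ [b])) :
    Φ x = Φ (cylPt (List.replicate (n + 1) a ++ [b])) := by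
  have h := mem_cyl_replicate_append.1 hx
  exact hΦ.eq_of_nClose hR (nClose_of_mem_cyl hx (cylPt_mem_cyl _)) (j := n) (by simp)
    (by rw [h.1 n (by omega), h.2]; exact hab)

lemma run_recursion (hΦ : IsPosEigenfunction β H lam Φ) (hR : ReducedDW H H0 H1) (hab : a ≠ b)
    (hHb : IsExcursionCost H b a Hb) (n : ℕ) :
    lam * Φ (cylPt (List.replicate (n + 1) a ++ [b]))
      = Φ (cylPt (List.replicate (n + 2) a ++ [b]))
        + Real.exp (-β * Hb (n + 1)) * Φ (cylPt [b, a]) := by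
  set y := cylPt (List.replicate (n + 1) a ++ [b])
  have hy : y ∈ cyl (List.replicate (n + 1) a ++ [b]) := cylPt_mem_cyl _
  have hy0 : y 0 = a := (mem_cyl_replicate_append.1 hy).1 0 (by omega)
  have hby : cons2 b y ∈ cyl (b :: (List.replicate (n + 1) a ++ [b])) :=
    cons2_mem_cyl_cons.2 ⟨rfl, hy⟩
  rw [← hΦ.apply_eq, transfer_eq_of_ne hab, hR.eq_zero_of_eq (x := cons2 a y) hy0.symm,
    hHb (n + 1) (by omega) _ hby, hΦ.eq_on_run hR hab (n + 1) (cons2_mem_cyl_cons.2 ⟨rfl, hy⟩),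
    hΦ.eq_on_pair hR hab.symm hby]
  simp

/-- The rescaled values `Φ(aⁿ⁺ᵏ⁺¹b) λ^{-(n+k)}` telescope by `run_recursion` and tend to `0`. -/
lemma hasSum_run (hΦ : IsPosEigenfunction β H lam Φ) (hR : ReducedDW H H0 H1) (hβ : 0 ≤ β)
    (hlam : 1 < lam) (hab : a ≠ b) (hHb : IsExcursionCost H b a Hb) (n : ℕ) :
    HasSum (fun j => Φ (cylPt [b, a]) * excWeight β Hb lam (n + 1 + j))
      (Φ (cylPt (List.replicate (n + 1) a ++ [b])) * (lam ^ n)⁻¹) := by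
  set e : ℕ → ℝ := fun k => Φ (cylPt (List.replicate (n + k + 1) a ++ [b])) * (lam ^ (n + k))⁻¹
  obtain ⟨C, hC⟩ := (isCompact_range hΦ.continuous).bddAbove
  have he : Tendsto e atTop (𝓝 0) := by
    have hq : Tendsto (fun k => C * lam⁻¹ ^ (n + k)) atTop (𝓝 0) := by
      simpa [add_comm n] using ((tendsto_pow_atTop_nhds_zero_of_lt_one (by positivity)
        (inv_lt_one_of_one_lt₀ hlam)).comp (tendsto_add_atTop_nat n)).const_mul C
    refine squeeze_zero (fun k => (mul_pos (hΦ.pos _) (by positivity)).le) (fun k => ?_) hq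
    rw [inv_pow]
    exact mul_le_mul_of_nonneg_right (hC ⟨_, rfl⟩) (by positivity)
  have hb := ((summable_nat_add_iff n).2
    (summable_excWeight hβ hlam (hHb.nonneg hR.nonneg))).mul_left (Φ (cylPt [b, a]))
  refine hasSum_of_sub_succ he (hb.congr fun j => by rw [show j + n + 1 = n + 1 + j by omega])
    fun k => ?_
  have h := hΦ.run_recursion hR hab hHb (n + k)
  simp only [e, show n + (k + 1) = n + k + 1 by omega, show n + 1 + k = n + k + 1 by omega,
    excWeight, pow_succ]
  generalize Real.exp (-β * Hb (n + k + 1)) = E at h ⊢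
  field_simp
  linear_combination h

lemma eq_mul_Fser (hΦ : IsPosEigenfunction β H lam Φ) (hR : ReducedDW H H0 H1) (hβ : 0 ≤ β)
    (hlam : 1 < lam) (hab : a ≠ b) (hHb : IsExcursionCost H b a Hb) :
    Φ (cylPt [a, b]) = Φ (cylPt [b, a]) * Fser β Hb lam := by
  have h := (hΦ.hasSum_run hR hβ hlam hab hHb 0).tsum_eq
  simp only [pow_zero, inv_one, mul_one, zero_add, tsum_mul_left] at h
  rw [show List.replicate 1 a ++ [b] = [a, b] from rfl] at h
  rw [← h]
  simp only [Fser, excWeight, add_comm 1]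

lemma Fser_mul_Fser_eq_one (hΦ : IsPosEigenfunction β H lam Φ) (hR : ReducedDW H H0 H1)
    (hβ : 0 ≤ β) (hlam : 1 < lam) (hab : a ≠ b) {Ha : ℕ → ℝ} (hHa : IsExcursionCost H a b Ha)
    (hHb : IsExcursionCost H b a Hb) : Fser β Ha lam * Fser β Hb lam = 1 := by
  have h₁ := hΦ.eq_mul_Fser hR hβ hlam hab hHb
  have h₂ := hΦ.eq_mul_Fser hR hβ hlam hab.symm hHa
  refine mul_left_cancel₀ (hΦ.pos (cylPt [a, b])).ne' ?_
  linear_combination -h₁ - Fser β Hb lam * h₂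

end IsPosEigenfunction

end Excursion

section ExcursionMeasure

variable {β lam : ℝ} {H : Sig → ℝ} {H0 H1 : ℕ → ℝ} {Φ : Sig → ℝ} {a b : Fin 2} {Hb : ℕ → ℝ}
  {ν : Measure Sig}

lemma measureReal_cyl_run [IsFiniteMeasure ν] (hR : ReducedDW H H0 H1)
    (hν : IsEigenmeasure β H lam ν) (hlam : lam ≠ 0) (n : ℕ) :
    ν.real (cyl (List.replicate (n + 1) a ++ [b])) = (lam ^ n)⁻¹ * ν.real (cyl [a, b]) := by
  induction n with
  | zero => simp [List.replicate]
  | succ n ih =>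
    rw [show List.replicate (n + 2) a ++ [b] = a :: (List.replicate (n + 1) a ++ [b]) from rfl,
      measureReal_cyl_cons_of_eq hν hlam (h := 0) fun x hx =>
        hR.eq_zero_of_eq ((mem_cyl_replicate_append.1 hx).1 0 (by omega)).symm, ih, pow_succ]
    simp only [mul_zero, Real.exp_zero, mul_one, mul_inv]
    ring

lemma measureReal_cyl_excursion [IsFiniteMeasure ν] (hR : ReducedDW H H0 H1)
    (hν : IsEigenmeasure β H lam ν) (hlam : lam ≠ 0) (hHb : IsExcursionCost H b a Hb) (n : ℕ) :
    ν.real (cyl (b :: (List.replicate (n + 1) a ++ [b])))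
      = excWeight β Hb lam (n + 1) * ν.real (cyl [a, b]) := by
  rw [measureReal_cyl_cons_of_eq hν hlam fun x hx =>
      hHb (n + 1) (by omega) _ (cons2_mem_cyl_cons.2 ⟨rfl, hx⟩),
    measureReal_cyl_run hR hν hlam, excWeight, pow_succ, mul_inv]
  ring

lemma setIntegral_eq_mul_of_eqOn [IsFiniteMeasure ν] {s : Set Sig} (hs : MeasurableSet s) {c : ℝ}
    (hc : ∀ x ∈ s, Φ x = c) : ∫ x in s, Φ x ∂ν = c * ν.real s := by
  rw [setIntegral_congr_fun hs hc, setIntegral_const, smul_eq_mul, mul_comm]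

variable [IsProbabilityMeasure ν]

lemma measureReal_cyl_pair (hR : ReducedDW H H0 H1) (hβ : 0 ≤ β) (hν : IsEigenmeasure β H lam ν)
    (hab : a ≠ b) (hHb : IsExcursionCost H b a Hb) :
    ν.real (cyl [b, a]) = Fser β Hb lam * ν.real (cyl [a, b]) := by
  have hlam := one_lt_of_isEigenmeasure hR hν
  have hlam₀ : lam ≠ 0 := (zero_lt_one.trans hlam).ne'
  have hterm : ∀ n, ∫ x in cyl (List.replicate (n + 1) a ++ [b]), Real.exp (-β * H (cons2 b x)) ∂ν
      = lam * (excWeight β Hb lam (n + 1) * ν.real (cyl [a, b])) := fun n => by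
    rw [← measureReal_cyl_excursion hR hν hlam₀ hHb, measureReal_cyl_cons hν hlam₀,
      mul_inv_cancel_left₀ hlam₀]
  rw [measureReal_cyl_cons hν hlam₀, setIntegral_cyl_singleton_eq_tsum hR.cont hR.nonneg hβ hν
    hlam hab (integrable_of_continuous (by have := hR.cont; fun_prop)), tsum_congr hterm,
    tsum_mul_left, tsum_mul_right, inv_mul_cancel_left₀ hlam₀]
  rfl

lemma setIntegral_cyl_pair_eq_mul_Fser (hΦ : IsPosEigenfunction β H lam Φ) (hR : ReducedDW H H0 H1)
    (hβ : 0 ≤ β) (hν : IsEigenmeasure β H lam ν) (hab : a ≠ b) (hHb : IsExcursionCost H b a Hb) :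
    ∫ x in cyl [a, b], Φ x ∂ν = Φ (cylPt [b, a]) * ν.real (cyl [a, b]) * Fser β Hb lam := by
  rw [setIntegral_eq_mul_of_eqOn (measurableSet_cyl _) fun x hx => hΦ.eq_on_pair hR hab hx,
    hΦ.eq_mul_Fser hR hβ (one_lt_of_isEigenmeasure hR hν) hab hHb]
  ring

lemma setIntegral_cyl_pair_swap_eq_mul_Fser (hΦ : IsPosEigenfunction β H lam Φ)
    (hR : ReducedDW H H0 H1) (hβ : 0 ≤ β) (hν : IsEigenmeasure β H lam ν) (hab : a ≠ b)
    (hHb : IsExcursionCost H b a Hb) :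
    ∫ x in cyl [b, a], Φ x ∂ν = Φ (cylPt [b, a]) * ν.real (cyl [a, b]) * Fser β Hb lam := by
  rw [setIntegral_eq_mul_of_eqOn (measurableSet_cyl _) fun x hx => hΦ.eq_on_pair hR hab.symm hx,
    measureReal_cyl_pair hR hβ hν hab hHb]
  ring

lemma setIntegral_cyl_run_eq_mul_tsum (hΦ : IsPosEigenfunction β H lam Φ) (hR : ReducedDW H H0 H1)
    (hβ : 0 ≤ β) (hν : IsEigenmeasure β H lam ν) (hab : a ≠ b) (hHb : IsExcursionCost H b a Hb)
    (n : ℕ) : ∫ x in cyl (List.replicate (n + 1) a ++ [b]), Φ x ∂ν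
      = Φ (cylPt [b, a]) * ν.real (cyl [a, b]) * ∑' j, excWeight β Hb lam (n + 1 + j) := by
  have hlam := one_lt_of_isEigenmeasure hR hν
  rw [setIntegral_eq_mul_of_eqOn (measurableSet_cyl _) fun x hx => hΦ.eq_on_run hR hab n hx,
    measureReal_cyl_run hR hν (zero_lt_one.trans hlam).ne', ← mul_assoc,
    ← (hΦ.hasSum_run hR hβ hlam hab hHb n).tsum_eq, tsum_mul_left]
  ring

lemma setIntegral_cyl_singleton_eq_mul_Ftser (hΦ : IsPosEigenfunction β H lam Φ)
    (hR : ReducedDW H H0 H1) (hβ : 0 ≤ β) (hν : IsEigenmeasure β H lam ν) (hab : a ≠ b)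
    (hHb : IsExcursionCost H b a Hb) :
    ∫ x in cyl [a], Φ x ∂ν = Φ (cylPt [b, a]) * ν.real (cyl [a, b]) * Ftser β Hb lam := by
  have hlam := one_lt_of_isEigenmeasure hR hν
  rw [setIntegral_cyl_singleton_eq_tsum hR.cont hR.nonneg hβ hν hlam hab
      (integrable_of_continuous hΦ.continuous),
    tsum_congr (setIntegral_cyl_run_eq_mul_tsum hΦ hR hβ hν hab hHb), tsum_mul_left,
    Ftser_eq_tsum_tsum hβ hlam (hHb.nonneg hR.nonneg)]

lemma setIntegral_cyl_excursion_eq_mul_excWeight (hΦ : IsPosEigenfunction β H lam Φ)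
    (hR : ReducedDW H H0 H1) (hν : IsEigenmeasure β H lam ν) (hab : a ≠ b)
    (hHb : IsExcursionCost H b a Hb) (n : ℕ) :
    ∫ x in cyl (b :: (List.replicate (n + 1) a ++ [b])), Φ x ∂ν
      = Φ (cylPt [b, a]) * ν.real (cyl [a, b]) * excWeight β Hb lam (n + 1) := by
  rw [show b :: (List.replicate (n + 1) a ++ [b]) = b :: a :: (List.replicate n a ++ [b]) from rfl,
    setIntegral_eq_mul_of_eqOn (measurableSet_cyl _) fun x hx => hΦ.eq_on_pair hR hab.symm hx,
    ← List.cons_append, ← List.replicate_succ,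
    measureReal_cyl_excursion hR hν (zero_lt_one.trans (one_lt_of_isEigenmeasure hR hν)).ne' hHb]
  ring

end ExcursionMeasure

lemma measureReal_smul_withDensity {ν : Measure Sig} [IsFiniteMeasure ν] {Φ : Sig → ℝ}
    (hΦ : Continuous Φ) (hΦnn : ∀ x, 0 ≤ Φ x) {s : Set Sig} (hs : MeasurableSet s) :
    ((ENNReal.ofReal (∫ x, Φ x ∂ν))⁻¹ • ν.withDensity (fun x => ENNReal.ofReal (Φ x))).real s
      = (∫ x, Φ x ∂ν)⁻¹ * ∫ x in s, Φ x ∂ν := by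
  rw [measureReal_def, Measure.smul_apply, smul_eq_mul, withDensity_apply _ hs,
    ← ofReal_integral_eq_lintegral_ofReal (integrable_of_continuous hΦ).integrableOn
      (.of_forall hΦnn), ENNReal.toReal_mul, ENNReal.toReal_inv,
    ENNReal.toReal_ofReal (integral_nonneg hΦnn),
    ENNReal.toReal_ofReal (setIntegral_nonneg hs fun x _ => hΦnn x)]

theorem gibbs_cyl_ratios {β lam : ℝ} {H : Sig → ℝ} {H0 H1 : ℕ → ℝ} {Φ : Sig → ℝ} {a b : Fin 2}
    {Ha Hb : ℕ → ℝ} {ν μ : Measure Sig} [IsProbabilityMeasure ν]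
    (hΦ : IsPosEigenfunction β H lam Φ) (hR : ReducedDW H H0 H1) (hβ : 0 ≤ β)
    (hν : IsEigenmeasure β H lam ν) (hab : a ≠ b) (hHa : IsExcursionCost H a b Ha)
    (hHb : IsExcursionCost H b a Hb)
    (hμ : μ = (ENNReal.ofReal (∫ x, Φ x ∂ν))⁻¹ • ν.withDensity (fun x => ENNReal.ofReal (Φ x))) :
    (μ (cyl [a, b])).toReal = (μ (cyl [b, a])).toReal ∧
    (∀ n : ℕ, 1 ≤ n →
      (μ (cyl (List.replicate n a ++ [b]))).toReal / (μ (cyl [a, b])).toReal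
        = (∑' j, excWeight β Hb lam (n + j)) * Fser β Ha lam) ∧
    (μ (cyl [a])).toReal / (μ (cyl [a, b])).toReal = Ftser β Hb lam / Fser β Hb lam ∧
    (∀ n : ℕ, 1 ≤ n →
      (μ (cyl (b :: (List.replicate n a ++ [b])))).toReal / (μ (cyl [a, b])).toReal
        = Real.exp (-β * Hb n) * Fser β Ha lam / lam ^ n) ∧
    0 < (μ (cyl [a, b])).toReal := by
  have hlam := one_lt_of_isEigenmeasure hR hν
  have hF := hΦ.Fser_mul_Fser_eq_one hR hβ hlam hab hHa hHb
  have hFb := Fser_pos hβ hlam (hHb.nonneg hR.nonneg)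
  have hK : 0 < Φ (cylPt [b, a]) * ν.real (cyl [a, b]) :=
    mul_pos (hΦ.pos _) (measureReal_cyl_pos hR.cont hν (zero_lt_one.trans hlam) _)
  have hZ : 0 < ∫ x, Φ x ∂ν :=
    (integral_pos_iff_support_of_nonneg (fun x => (hΦ.pos x).le)
      (integrable_of_continuous hΦ.continuous)).2 (by simp [Function.support, (hΦ.pos _).ne'])
  have hμ' : ∀ w, (μ (cyl w)).toReal = (∫ x, Φ x ∂ν)⁻¹ * ∫ x in cyl w, Φ x ∂ν := fun w => by
    rw [hμ]
    exact measureReal_smul_withDensity hΦ.continuous (fun x => (hΦ.pos x).le) (measurableSet_cyl w)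
  have hratio : ∀ w, (μ (cyl w)).toReal / (μ (cyl [a, b])).toReal
      = (∫ x in cyl w, Φ x ∂ν) / (Φ (cylPt [b, a]) * ν.real (cyl [a, b]) * Fser β Hb lam) :=
    fun w => by
      rw [hμ', hμ', setIntegral_cyl_pair_eq_mul_Fser hΦ hR hβ hν hab hHb,
        mul_div_mul_left _ _ (inv_ne_zero hZ.ne')]
  refine ⟨?_, fun n hn => ?_, ?_, fun n hn => ?_, ?_⟩
  · rw [hμ', hμ', setIntegral_cyl_pair_eq_mul_Fser hΦ hR hβ hν hab hHb,
      setIntegral_cyl_pair_swap_eq_mul_Fser hΦ hR hβ hν hab hHb]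
  · obtain ⟨m, rfl⟩ := Nat.exists_eq_add_of_le' hn
    rw [hratio, setIntegral_cyl_run_eq_mul_tsum hΦ hR hβ hν hab hHb m, mul_div_mul_left _ _ hK.ne',
      div_eq_iff hFb.ne']
    linear_combination (-∑' j, excWeight β Hb lam (m + 1 + j)) * hF
  · rw [hratio, setIntegral_cyl_singleton_eq_mul_Ftser hΦ hR hβ hν hab hHb,
      mul_div_mul_left _ _ hK.ne']
  · obtain ⟨m, rfl⟩ := Nat.exists_eq_add_of_le' hn
    rw [hratio, setIntegral_cyl_excursion_eq_mul_excWeight hΦ hR hν hab hHb m,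
      mul_div_mul_left _ _ hK.ne', excWeight]
    field_simp
    linear_combination -hF
  · rw [hμ', setIntegral_cyl_pair_eq_mul_Fser hΦ hR hβ hν hab hHb]
    positivity

/-- explicit formulas for the Gibbs measure `μ_β` of a reduced double-well type
potential on the basic cylinders. -/
theorem stmt_13 (H : Sig → ℝ) (H0 H1 : ℕ → ℝ) (hR : ReducedDW H H0 H1)
    (β : ℝ) (hβ : 0 < β) (Φ : Sig → ℝ) (lam : ℝ) (ν μ : Measure Sig)
    (hG : GibbsData H β Φ lam ν μ) :
    (μ (cyl [0, 1])).toReal = (μ (cyl [1, 0])).toReal ∧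
    (∀ n : ℕ, 1 ≤ n →
      (μ (cyl (List.replicate n 0 ++ [1]))).toReal / (μ (cyl [0, 1])).toReal
        = (∑' j : ℕ, (lam ^ (n + j))⁻¹ * Real.exp (-β * H1 (n + j))) * Fser β H0 lam) ∧
    (μ (cyl [0])).toReal / (μ (cyl [0, 1])).toReal = Ftser β H1 lam / Fser β H1 lam ∧
    (∀ n : ℕ, 1 ≤ n →
      (μ (cyl (List.replicate n 1 ++ [0]))).toReal / (μ (cyl [1, 0])).toReal
        = (∑' j : ℕ, (lam ^ (n + j))⁻¹ * Real.exp (-β * H0 (n + j))) * Fser β H1 lam) ∧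
    (μ (cyl [1])).toReal / (μ (cyl [1, 0])).toReal = Ftser β H0 lam / Fser β H0 lam ∧
    (∀ n : ℕ, 1 ≤ n →
      (μ (cyl (0 :: (List.replicate n 1 ++ [0])))).toReal / (μ (cyl [1, 0])).toReal
        = Real.exp (-β * H0 n) * Fser β H1 lam / lam ^ n ∧
      (μ (cyl (1 :: (List.replicate n 0 ++ [1])))).toReal / (μ (cyl [0, 1])).toReal
        = Real.exp (-β * H1 n) * Fser β H0 lam / lam ^ n) ∧
    (μ (cyl [0])).toReal / (μ (cyl [1])).toReal
      = (Fser β H0 lam / Fser β H1 lam) * (Ftser β H1 lam / Ftser β H0 lam) := by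
  obtain ⟨hΦc, hΦpos, -, -, heig, hν, hνL, hμ⟩ := hG
  have hΦ : IsPosEigenfunction β H lam Φ := ⟨hΦc, hΦpos, heig⟩
  obtain ⟨h01, hrun0, hsingle0, hexc0, hpos⟩ :=
    gibbs_cyl_ratios hΦ hR hβ.le hνL zero_ne_one hR.val0 hR.val1 hμ
  obtain ⟨-, hrun1, hsingle1, hexc1, -⟩ :=
    gibbs_cyl_ratios hΦ hR hβ.le hνL one_ne_zero hR.val1 hR.val0 hμ
  refine ⟨h01, hrun0, hsingle0, hrun1, hsingle1, fun n hn => ⟨hexc1 n hn, hexc0 n hn⟩, ?_⟩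
  rw [← div_div_div_cancel_right₀ hpos.ne', hsingle0, h01, hsingle1, div_div_div_eq,
    div_mul_div_comm, mul_comm (Fser β H0 lam)]
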